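/- arXiv:2412.15665 — 4 statements merged into one kernel-verified Lean document; each statement's English description precedes it below -/
import Mathlib

section
/- In the RCC separation QUBO model with penalty factor P > 1, every binary vector (x,w) with C₂^RCC(x,w) > 0 is not optimal: there exists (x',w') with C^RCC(x',w') < C^RCC(x,w). Consequently every optimal solution of the QUBO satisfies C₂^RCC = 0. -/
/-!
If some route `r` has penalty `∑ i ∈ route r, (x i - w r * x i) > 0`, then `w r = 0` and route `r`
contains some `i` with `x i = 1`, so its penalty is at least `1`. Switching `w r` to `1` removes that
penalty, saving at least `P > 1`, at the price of `y r ≤ 1` in the objective.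
-/

open Finset Function

theorem Fintype.sum_update_eq_add_sub {ι α M : Type*} [Fintype ι] [DecidableEq ι]
    [AddCommGroup M] (f : ι → α → M) (w : ι → α) (r : ι) (a : α) :
    ∑ r', f r' (update w r a r') = ∑ r', f r' (w r') + (f r a - f r (w r)) := by
  rw [← sub_eq_iff_eq_add', ← sum_sub_distrib,
    Fintype.sum_eq_single r fun r' h => by simp [update_of_ne h]]
  simp

theorem nonneg_of_binary {a : ℝ} (h : a = 0 ∨ a = 1) : 0 ≤ a := by
  rcases h with rfl | rfl <;> norm_num

theorem le_one_of_binary {a : ℝ} (h : a = 0 ∨ a = 1) : a ≤ 1 := by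
  rcases h with rfl | rfl <;> norm_num

theorem one_le_sum_of_binary {α : Type*} {s : Finset α} {x : α → ℝ}
    (hx : ∀ i ∈ s, x i = 0 ∨ x i = 1) (hpos : 0 < ∑ i ∈ s, x i) : 1 ≤ ∑ i ∈ s, x i := by
  obtain ⟨i, hi, hxi⟩ := exists_lt_of_sum_lt (f := fun _ => (0 : ℝ)) (by simpa using hpos)
  have hxi : x i = 1 := (hx i hi).resolve_left hxi.ne'
  exact hxi ▸ single_le_sum (fun j hj => nonneg_of_binary (hx j hj)) hi

theorem sum_sub_mul_self_nonneg {α : Type*} {s : Finset α} {x : α → ℝ} {v : ℝ}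
    (hx : ∀ i ∈ s, 0 ≤ x i) (hv : v ≤ 1) : 0 ≤ ∑ i ∈ s, (x i - v * x i) :=
  sum_nonneg fun i hi => by nlinarith [hx i hi]

section RCC

variable {α ι : Type*} [Fintype ι]
  (route : ι → Finset α) (y : ι → ℝ) (d : α → ℝ) (C P : ℝ)

def rccPenalty (x : α → ℝ) (w : ι → ℝ) : ℝ :=
  ∑ r, ∑ i ∈ route r, (x i - w r * x i)

noncomputable def rccCost [Fintype α] (x : α → ℝ) (w : ι → ℝ) : ℝ :=
  (∑ r, y r * w r) - (1 / C) * ∑ i, d i * x i + P * rccPenalty route x w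

variable {route y d C P}

theorem rccPenalty_nonneg {x : α → ℝ} {w : ι → ℝ} (hx : ∀ i, 0 ≤ x i) (hw : ∀ r, w r ≤ 1) :
    0 ≤ rccPenalty route x w :=
  sum_nonneg fun r _ => sum_sub_mul_self_nonneg (fun i _ => hx i) (hw r)

theorem exists_uncovered_route_of_rccPenalty_pos {x : α → ℝ} {w : ι → ℝ}
    (hx : ∀ i, x i = 0 ∨ x i = 1) (hw : ∀ r, w r = 0 ∨ w r = 1)
    (hpos : 0 < rccPenalty route x w) : ∃ r, w r = 0 ∧ 1 ≤ ∑ i ∈ route r, x i := by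
  obtain ⟨r, -, hr⟩ := exists_lt_of_sum_lt (s := univ) (f := fun _ => (0 : ℝ))
    (g := fun r => ∑ i ∈ route r, (x i - w r * x i)) (by rwa [sum_const_zero])
  have hwr : w r = 0 := (hw r).resolve_right fun h => by simp [h] at hr
  simp only [hwr, zero_mul, sub_zero] at hr
  exact ⟨r, hwr, one_le_sum_of_binary (fun i _ => hx i) hr⟩

theorem rccCost_update_lt [Fintype α] [DecidableEq ι] {x : α → ℝ} {w : ι → ℝ} {r : ι}
    (hwr : w r = 0) (hroute : 1 ≤ ∑ i ∈ route r, x i) (hy : y r ≤ 1) (hP : 1 < P) :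
    rccCost route y d C P x (update w r 1) < rccCost route y d C P x w := by
  have hpenalty : rccPenalty route x (update w r 1)
      = rccPenalty route x w - ∑ i ∈ route r, x i := by
    simp only [rccPenalty,
      Fintype.sum_update_eq_add_sub (fun r v => ∑ i ∈ route r, (x i - v * x i)), hwr]
    simp only [one_mul, zero_mul, sub_self, sub_zero, sum_const_zero, zero_sub]
    ring
  have hlinear : ∑ r', y r' * update w r 1 r' = ∑ r', y r' * w r' + y r := by
    simp [Fintype.sum_update_eq_add_sub (fun r v => y r * v), hwr]
  simp only [rccCost, hpenalty, hlinear]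
  nlinarith

theorem exists_rccCost_lt_of_rccPenalty_pos [Fintype α] {x : α → ℝ} {w : ι → ℝ}
    (hy : ∀ r, y r ≤ 1) (hP : 1 < P)
    (hx : ∀ i, x i = 0 ∨ x i = 1) (hw : ∀ r, w r = 0 ∨ w r = 1)
    (hpos : 0 < rccPenalty route x w) :
    ∃ w' : ι → ℝ, (∀ r, w' r = 0 ∨ w' r = 1) ∧
      rccCost route y d C P x w' < rccCost route y d C P x w := by
  classical
  obtain ⟨r, hwr, hroute⟩ := exists_uncovered_route_of_rccPenalty_pos hx hw hpos
  refine ⟨update w r 1, fun r' => ?_, rccCost_update_lt hwr hroute (hy r) hP⟩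
  rcases eq_or_ne r' r with rfl | h
  · simp
  · simpa [update_of_ne h] using hw r'

end RCC

theorem rcc_qubo_penalty_general (n : ℕ) (ι : Type) [Fintype ι]
    (route : ι → Finset (Fin n)) (y : ι → ℝ) (hy : ∀ r, 0 < y r ∧ y r ≤ 1)
    (d : Fin n → ℝ) (C : ℝ) (P : ℝ) (hP : P > 1) :
    (∀ x : Fin n → ℝ, ∀ w : ι → ℝ,
      (∀ i, x i = 0 ∨ x i = 1) → (∀ r, w r = 0 ∨ w r = 1) →
      (∑ r : ι, ∑ i ∈ route r, (x i - w r * x i)) > 0 →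
      ∃ x' : Fin n → ℝ, ∃ w' : ι → ℝ,
        (∀ i, x' i = 0 ∨ x' i = 1) ∧ (∀ r, w' r = 0 ∨ w' r = 1) ∧
        ((∑ r : ι, y r * w' r) - (1 / C) * ∑ i : Fin n, d i * x' i
            + P * ∑ r : ι, ∑ i ∈ route r, (x' i - w' r * x' i))
          < ((∑ r : ι, y r * w r) - (1 / C) * ∑ i : Fin n, d i * x i
            + P * ∑ r : ι, ∑ i ∈ route r, (x i - w r * x i))) ∧
    (∀ x : Fin n → ℝ, ∀ w : ι → ℝ,
      (∀ i, x i = 0 ∨ x i = 1) → (∀ r, w r = 0 ∨ w r = 1) →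
      (∀ x' : Fin n → ℝ, ∀ w' : ι → ℝ,
        (∀ i, x' i = 0 ∨ x' i = 1) → (∀ r, w' r = 0 ∨ w' r = 1) →
        ((∑ r : ι, y r * w r) - (1 / C) * ∑ i : Fin n, d i * x i
            + P * ∑ r : ι, ∑ i ∈ route r, (x i - w r * x i))
          ≤ ((∑ r : ι, y r * w' r) - (1 / C) * ∑ i : Fin n, d i * x' i
            + P * ∑ r : ι, ∑ i ∈ route r, (x' i - w' r * x' i))) →
      (∑ r : ι, ∑ i ∈ route r, (x i - w r * x i)) = 0) := by
  have improve : ∀ (x : Fin n → ℝ) (w : ι → ℝ), (∀ i, x i = 0 ∨ x i = 1) →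
      (∀ r, w r = 0 ∨ w r = 1) → 0 < rccPenalty route x w →
      ∃ w' : ι → ℝ, (∀ r, w' r = 0 ∨ w' r = 1) ∧
        rccCost route y d C P x w' < rccCost route y d C P x w :=
    fun _ _ => exists_rccCost_lt_of_rccPenalty_pos (fun r => (hy r).2) hP
  refine ⟨fun x w hx hw hpos => ?_, fun x w hx hw hopt => ?_⟩
  · obtain ⟨w', hw', hlt⟩ := improve x w hx hw hpos
    exact ⟨x, w', hx, hw', hlt⟩
  · have hnonneg : 0 ≤ rccPenalty route x w :=
      rccPenalty_nonneg (fun i => nonneg_of_binary (hx i)) (fun r => le_one_of_binary (hw r))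
    refine le_antisymm (not_lt.mp fun hpos => ?_) hnonneg
    obtain ⟨w', hw', hlt⟩ := improve x w hx hw hpos
    exact (hopt x w' hx hw').not_gt hlt

/-- RCC separation QUBO: with penalty factor `P > 1`, any binary vector `(x, w)` with
positive penalty `C₂` is not optimal — there is a binary `(x', w')` with strictly
smaller cost — and consequently every optimal binary solution has zero penalty. -/
theorem rcc_qubo_penalty (n : ℕ) (ι : Type) [Fintype ι]
    (route : ι → Finset (Fin n)) (y : ι → ℝ) (hy : ∀ r, 0 < y r ∧ y r ≤ 1)
    (d : Fin n → ℝ) (C : ℝ) (hC : 0 < C) (P : ℝ) (hP : P > 1) :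
    (∀ x : Fin n → ℝ, ∀ w : ι → ℝ,
      (∀ i, x i = 0 ∨ x i = 1) → (∀ r, w r = 0 ∨ w r = 1) →
      (∑ r : ι, ∑ i ∈ route r, (x i - w r * x i)) > 0 →
      ∃ x' : Fin n → ℝ, ∃ w' : ι → ℝ,
        (∀ i, x' i = 0 ∨ x' i = 1) ∧ (∀ r, w' r = 0 ∨ w' r = 1) ∧
        ((∑ r : ι, y r * w' r) - (1 / C) * ∑ i : Fin n, d i * x' i
            + P * ∑ r : ι, ∑ i ∈ route r, (x' i - w' r * x' i))
          < ((∑ r : ι, y r * w r) - (1 / C) * ∑ i : Fin n, d i * x i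
            + P * ∑ r : ι, ∑ i ∈ route r, (x i - w r * x i))) ∧
    (∀ x : Fin n → ℝ, ∀ w : ι → ℝ,
      (∀ i, x i = 0 ∨ x i = 1) → (∀ r, w r = 0 ∨ w r = 1) →
      (∀ x' : Fin n → ℝ, ∀ w' : ι → ℝ,
        (∀ i, x' i = 0 ∨ x' i = 1) → (∀ r, w' r = 0 ∨ w' r = 1) →
        ((∑ r : ι, y r * w r) - (1 / C) * ∑ i : Fin n, d i * x i
            + P * ∑ r : ι, ∑ i ∈ route r, (x i - w r * x i))
          ≤ ((∑ r : ι, y r * w' r) - (1 / C) * ∑ i : Fin n, d i * x' i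
            + P * ∑ r : ι, ∑ i ∈ route r, (x' i - w' r * x' i))) →
      (∑ r : ι, ∑ i ∈ route r, (x i - w r * x i)) = 0) :=
  rcc_qubo_penalty_general n ι route y hy d C P hP
end

section
/- The rounded capacity cut is valid: for any feasible integral solution y ∈ {0,1}^R of the set cover model of the CVRP and any nonempty customer subset S ⊆ V, the number of routes r with y_r = 1 and r ∩ S ≠ ∅ is at least ⌈D(S)/K⌉, where D(S) = ∑_{i∈S} d_i. -/
/-!
Each customer of `S` lies on some selected route, and that route then meets `S`; so the demand
`D(S)` is at most the sum, over the selected routes meeting `S`, of the demand they serve in `S`.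
Each such route serves at most `K`, hence `D(S) ≤ K · #{r | r ∩ S ≠ ∅}`, and the count, being an
integer, is at least `⌈D(S)/K⌉`.
-/

open Finset

namespace Finset

variable {ι M : Type*} [DecidableEq ι] [AddCommMonoid M] [PartialOrder M] [IsOrderedAddMonoid M]
  {f : ι → M} {S : Finset ι}

theorem sum_le_sum_sum_inter_of_forall_exists_mem {F : Finset (Finset ι)}
    (hf : ∀ i ∈ S, 0 ≤ f i) (hcover : ∀ i ∈ S, ∃ r ∈ F, i ∈ r) :
    ∑ i ∈ S, f i ≤ ∑ r ∈ F, ∑ i ∈ r ∩ S, f i := by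
  rw [sum_comm' (t' := S) (s' := fun i => {r ∈ F | i ∈ r}) (by simp only [mem_inter, mem_filter]; tauto)]
  refine sum_le_sum fun i hi => ?_
  obtain ⟨r, hrF, hir⟩ := hcover i hi
  exact single_le_sum (f := fun _ => f i) (fun _ _ => hf i hi) (mem_filter.2 ⟨hrF, hir⟩)

theorem sum_le_card_filter_inter_nonempty_nsmul {R : Finset (Finset ι)} {K : M}
    (hf : ∀ i, 0 ≤ f i) (hcap : ∀ r ∈ R, ∑ i ∈ r, f i ≤ K) (hcover : ∀ i ∈ S, ∃ r ∈ R, i ∈ r) :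
    ∑ i ∈ S, f i ≤ #{r ∈ R | (r ∩ S).Nonempty} • K := by
  have hcover' : ∀ i ∈ S, ∃ r ∈ {r ∈ R | (r ∩ S).Nonempty}, i ∈ r := fun i hi => by
    obtain ⟨r, hrR, hir⟩ := hcover i hi
    exact ⟨r, mem_filter.2 ⟨hrR, i, mem_inter.2 ⟨hir, hi⟩⟩, hir⟩
  refine (sum_le_sum_sum_inter_of_forall_exists_mem (fun i _ => hf i) hcover').trans ?_
  refine sum_le_card_nsmul _ _ _ fun r hr => ?_
  exact (sum_le_sum_of_subset_of_nonneg inter_subset_left fun i _ _ => hf i).trans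
    (hcap r (mem_filter.1 hr).1)

end Finset

theorem rounded_capacity_cut_valid_general (n : ℕ)
    (d : Fin n → ℝ) (hd : ∀ i, 0 < d i) (K : ℝ) (hK : 0 < K)
    (Rsel : Finset (Finset (Fin n)))
    (hcap : ∀ r ∈ Rsel, ∑ i ∈ r, d i ≤ K)
    (hcover : ∀ i : Fin n, ∃ r ∈ Rsel, i ∈ r)
    (S : Finset (Fin n)) :
    ⌈(∑ i ∈ S, d i) / K⌉ ≤
      ((Rsel.filter (fun r => (r ∩ S).Nonempty)).card : ℤ) := by
  rw [Int.ceil_le, Int.cast_natCast, div_le_iff₀ hK, ← nsmul_eq_mul]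
  exact sum_le_card_filter_inter_nonempty_nsmul (fun i => (hd i).le) hcap fun i _ => hcover i

/-- Validity of rounded capacity cuts: in a feasible integral set-cover solution of
the CVRP (given by the finite set `Rsel` of selected routes, each respecting the
capacity, together covering all customers), for any nonempty customer subset `S`
the number of selected routes intersecting `S` is at least `⌈D(S)/K⌉`. -/
theorem rounded_capacity_cut_valid (n : ℕ)
    (d : Fin n → ℝ) (hd : ∀ i, 0 < d i) (K : ℝ) (hK : 0 < K)
    (Rsel : Finset (Finset (Fin n)))
    (hcap : ∀ r ∈ Rsel, ∑ i ∈ r, d i ≤ K)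
    (hcover : ∀ i : Fin n, ∃ r ∈ Rsel, i ∈ r)
    (S : Finset (Fin n)) (hS : S.Nonempty) :
    ⌈(∑ i ∈ S, d i) / K⌉ ≤
      ((Rsel.filter (fun r => (r ∩ S).Nonempty)).card : ℤ) :=
  rounded_capacity_cut_valid_general n d hd K hK Rsel hcap hcover S
end

section
/- A sufficient penalty for the TSP QUBO: if P > T_n, where T_n is the sum of the n largest distances t_uv, then every infeasible binary assignment x (one violating at least one of the row/column-sum-equals-one conditions) has strictly larger cost C^TSP(x) than every feasible assignment. -/
/-!
A feasible assignment is a permutation matrix, so its penalty terms vanish and its tour term is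
a sum of `n` distinct distances, hence at most `T < P`. An infeasible binary assignment has some
row or column sum equal to a natural number other than `1`, so its penalty is at least `P`,
while its tour term is nonnegative.
-/

open Finset

section Binary

variable {ι : Type*} [Fintype ι] {g : ι → ℝ}

lemma sum_eq_card_filter_eq_one (hg : ∀ u, g u = 0 ∨ g u = 1) :
    ∑ u, g u = #{u | g u = 1} := by
  rw [← sum_boole]
  refine sum_congr rfl fun u _ => ?_
  rcases hg u with h | h <;> simp [h]

lemma exists_eq_ite_of_sum_eq_one [DecidableEq ι] (hg : ∀ u, g u = 0 ∨ g u = 1)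
    (hsum : ∑ u, g u = 1) :
    ∃ w, ∀ u, g u = if u = w then 1 else 0 := by
  rw [sum_eq_card_filter_eq_one hg, Nat.cast_eq_one, card_eq_one] at hsum
  obtain ⟨w, hw⟩ := hsum
  refine ⟨w, fun u => ?_⟩
  have hmem := congrArg (u ∈ ·) hw
  simp only [mem_filter, mem_univ, true_and, mem_singleton, eq_iff_iff] at hmem
  split_ifs with hu
  · exact hmem.mpr hu
  · exact (hg u).resolve_right (hu ∘ hmem.mp)

lemma one_le_sq_one_sub_natCast {m : ℕ} (hm : m ≠ 1) : 1 ≤ (1 - (m : ℝ)) ^ 2 := by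
  rcases m with _ | _ | m
  · simp
  · exact absurd rfl hm
  · have hm : (0 : ℝ) ≤ m := m.cast_nonneg
    push_cast
    nlinarith

lemma one_le_sq_one_sub_sum (hg : ∀ u, g u = 0 ∨ g u = 1) (hsum : ∑ u, g u ≠ 1) :
    1 ≤ (1 - ∑ u, g u) ^ 2 := by
  rw [sum_eq_card_filter_eq_one hg] at hsum ⊢
  exact one_le_sq_one_sub_natCast (by exact_mod_cast hsum)

end Binary

section Assignment

variable {α β : Type*} [DecidableEq α]

lemma exists_eq_ite_of_sum_col_eq_one [Fintype α] {x : α → β → ℝ}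
    (hx : ∀ v i, x v i = 0 ∨ x v i = 1) (hcol : ∀ i, ∑ v, x v i = 1) :
    ∃ f : β → α, ∀ v i, x v i = if v = f i then 1 else 0 := by
  choose f hf using fun i => exists_eq_ite_of_sum_eq_one (fun v => hx v i) (hcol i)
  exact ⟨f, fun v i => hf i v⟩

lemma injective_of_sum_row_ite_eq_one [Fintype β] {f : β → α}
    (hrow : ∀ v, ∑ i, (if v = f i then 1 else 0 : ℝ) = 1) : Function.Injective f := by
  intro i j hij
  have hcard := hrow (f i)
  rw [sum_boole, Nat.cast_eq_one] at hcard
  exact card_le_one.mp hcard.le i (by simp) j (by simp [hij])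

lemma sum_mul_sum_ite_mul_ite [Fintype α] [Fintype β] (t : α → α → ℝ) (f : β → α)
    (s : β → β) :
    ∑ u, ∑ v, t u v * ∑ i, (if u = f i then 1 else 0 : ℝ) * (if v = f (s i) then 1 else 0)
      = ∑ i, t (f i) (f (s i)) := by
  simp_rw [mul_sum, sum_comm (s := (univ : Finset α)) (t := (univ : Finset β))]
  simp [mul_ite]

end Assignment

lemma sum_le_of_isGreatest_sum_card_eq {α : Type*} [DecidableEq α] {w : α → ℝ}
    {n : ℕ} {T : ℝ}
    (hT : IsGreatest {s : ℝ | ∃ S : Finset α, S.card = n ∧ s = ∑ p ∈ S, w p} T)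
    {g : Fin n → α} (hg : Function.Injective g) : ∑ i, w (g i) ≤ T :=
  hT.2 ⟨univ.image g, by simp [card_image_of_injective _ hg],
    (sum_image fun _ _ _ _ h => hg h).symm⟩

lemma nonneg_of_isGreatest_sum_card_eq {α : Type*} {w : α → ℝ} (hw : ∀ p, 0 ≤ w p) {n : ℕ}
    {T : ℝ} (hT : IsGreatest {s : ℝ | ∃ S : Finset α, S.card = n ∧ s = ∑ p ∈ S, w p} T) :
    0 ≤ T := by
  obtain ⟨S, -, rfl⟩ := hT.1
  exact sum_nonneg fun p _ => hw p

lemma one_le_sum_sq_one_sub_sum_row_add_col {α β : Type*} [Fintype α] [Fintype β]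
    {x : α → β → ℝ} (hx : ∀ v i, x v i = 0 ∨ x v i = 1)
    (hinfeas : ¬ ((∀ v, ∑ i, x v i = 1) ∧ (∀ i, ∑ v, x v i = 1))) :
    1 ≤ ∑ v, (1 - ∑ i, x v i) ^ 2 + ∑ i, (1 - ∑ v, x v i) ^ 2 := by
  simp only [not_and_or, not_forall] at hinfeas
  rcases hinfeas with ⟨v, hv⟩ | ⟨i, hi⟩
  · calc 1 ≤ (1 - ∑ i, x v i) ^ 2 := one_le_sq_one_sub_sum (fun i => hx v i) hv
      _ ≤ ∑ v, (1 - ∑ i, x v i) ^ 2 := single_le_sum (f := fun v => (1 - ∑ i, x v i) ^ 2)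
        (fun _ _ => sq_nonneg _) (mem_univ v)
      _ ≤ _ := le_add_of_nonneg_right (sum_nonneg fun _ _ => sq_nonneg _)
  · calc 1 ≤ (1 - ∑ v, x v i) ^ 2 := one_le_sq_one_sub_sum (fun v => hx v i) hi
      _ ≤ ∑ i, (1 - ∑ v, x v i) ^ 2 := single_le_sum (f := fun i => (1 - ∑ v, x v i) ^ 2)
        (fun _ _ => sq_nonneg _) (mem_univ i)
      _ ≤ _ := le_add_of_nonneg_left (sum_nonneg fun _ _ => sq_nonneg _)

/-- Sufficient penalty for the TSP QUBO: if `P > Tₙ`, where `Tₙ` is the sum of the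
`n` largest distances, then every infeasible binary assignment has strictly larger
cost `C^TSP` than every feasible one. -/
theorem tsp_penalty_sufficient (n : ℕ) [NeZero n]
    (t : Fin n → Fin n → ℝ) (ht : ∀ u v, 0 < t u v)
    (T : ℝ)
    (hT : IsGreatest {s : ℝ | ∃ S : Finset (Fin n × Fin n),
        S.card = n ∧ s = ∑ p ∈ S, t p.1 p.2} T)
    (P : ℝ) (hP : P > T)
    (x x' : Fin n → Fin n → ℝ)
    (hx : ∀ v i, x v i = 0 ∨ x v i = 1)
    (hx' : ∀ v i, x' v i = 0 ∨ x' v i = 1)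
    (hinfeas : ¬ ((∀ v : Fin n, ∑ i : Fin n, x v i = 1) ∧
        (∀ i : Fin n, ∑ v : Fin n, x v i = 1)))
    (hfeas : (∀ v : Fin n, ∑ i : Fin n, x' v i = 1) ∧
        (∀ i : Fin n, ∑ v : Fin n, x' v i = 1)) :
    (∑ u : Fin n, ∑ v : Fin n, t u v * ∑ i : Fin n, x' u i * x' v (i + 1))
        + P * ∑ v : Fin n, (1 - ∑ i : Fin n, x' v i) ^ 2
        + P * ∑ i : Fin n, (1 - ∑ v : Fin n, x' v i) ^ 2
      < (∑ u : Fin n, ∑ v : Fin n, t u v * ∑ i : Fin n, x u i * x v (i + 1))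
        + P * ∑ v : Fin n, (1 - ∑ i : Fin n, x v i) ^ 2
        + P * ∑ i : Fin n, (1 - ∑ v : Fin n, x v i) ^ 2 := by
  obtain ⟨hrow, hcol⟩ := hfeas
  simp only [hrow, hcol, sub_self, zero_pow two_ne_zero, sum_const_zero, mul_zero, add_zero]
  obtain ⟨f, hf⟩ := exists_eq_ite_of_sum_col_eq_one hx' hcol
  have hf_inj : Function.Injective f := injective_of_sum_row_ite_eq_one fun v => by
    simpa only [hf] using hrow v
  have hfeas_tour : ∑ u, ∑ v, t u v * ∑ i, x' u i * x' v (i + 1) ≤ T := by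
    simp only [hf, sum_mul_sum_ite_mul_ite]
    exact sum_le_of_isGreatest_sum_card_eq hT (g := fun i => (f i, f (i + 1)))
      fun i j hij => hf_inj (congrArg Prod.fst hij)
  have hT0 : 0 ≤ T :=
    nonneg_of_isGreatest_sum_card_eq (fun p : Fin n × Fin n => (ht p.1 p.2).le) hT
  have hinfeas_tour : 0 ≤ ∑ u, ∑ v, t u v * ∑ i, x u i * x v (i + 1) := by
    have hx0 : ∀ v i, 0 ≤ x v i := fun v i => by rcases hx v i with h | h <;> simp [h]
    exact sum_nonneg fun u _ => sum_nonneg fun v _ => mul_nonneg (ht u v).le <|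
      sum_nonneg fun i _ => mul_nonneg (hx0 u i) (hx0 v (i + 1))
  have hpen := mul_le_mul_of_nonneg_left
    (one_le_sum_sq_one_sub_sum_row_add_col hx hinfeas) (hT0.trans hP.le)
  linarith
end

section
/- In the CPCTSP QUBO model, a binary vector (x,y,w) with zero penalty (all three penalty terms (7d), (7e), (7f) vanish) encodes a feasible route: each time step has exactly one visited vertex, each customer v is visited exactly y_v ∈ {0,1} times, and the capacity penalty (7f) vanishing implies ∑_{v∈V} d̃_v y_v = d̃_min + ∑_{k=0}^{M−2} 2^k w_k + (K̃ − d̃_min − 2^{M−1} + 1) w_{M−1}, and hence d̃_min ≤ ∑_v d̃_v y_v ≤ K̃. -/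
/-- In the CPCTSP QUBO model, a binary vector `(x, y, w)` with zero penalty encodes
a feasible route: each time step has exactly one visited vertex, each customer `v`
is visited exactly `y_v` times, the total demand equals the binary slack encoding,
and hence lies between `d̃_min` and `K̃`. -/
theorem cpctsp_zero_penalty_feasible (n m : ℕ) (hn : 0 < n)
    (d : Fin (n + 1) → ℕ) (hd : ∀ v : Fin (n + 1), v ≠ 0 → 0 < d v)
    (dmin : ℕ) (hdmin : IsLeast {k : ℕ | ∃ v : Fin (n + 1), v ≠ 0 ∧ d v = k} dmin)
    (K : ℕ) (hdK : dmin < K)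
    (M : ℕ) (hM : M = Nat.clog 2 (K - dmin + 1))
    (x : Fin (n + 1) → Fin m → ℝ) (hx : ∀ v j, x v j = 0 ∨ x v j = 1)
    (y : Fin (n + 1) → ℝ) (hy : ∀ v, y v = 0 ∨ y v = 1)
    (w : ℕ → ℝ) (hw : ∀ k, w k = 0 ∨ w k = 1)
    -- penalty term (7d) vanishes
    (h7d : ∑ j : Fin m, (1 - ∑ v : Fin (n + 1), x v j) ^ 2 = 0)
    -- penalty term (7e) vanishes
    (h7e : ∑ v ∈ Finset.univ.filter (fun v : Fin (n + 1) => v ≠ 0),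
      (y v - ∑ j : Fin m, x v j) ^ 2 = 0)
    -- penalty term (7f) vanishes
    (h7f : ((dmin : ℝ) + (∑ k ∈ Finset.range (M - 1), 2 ^ k * w k)
        + ((K : ℝ) - (dmin : ℝ) - 2 ^ (M - 1) + 1) * w (M - 1)
        - ∑ v ∈ Finset.univ.filter (fun v : Fin (n + 1) => v ≠ 0),
            (d v : ℝ) * y v) ^ 2 = 0) :
    (∀ j : Fin m, ∑ v : Fin (n + 1), x v j = 1) ∧
    (∀ v : Fin (n + 1), v ≠ 0 → y v = ∑ j : Fin m, x v j) ∧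
    (∑ v ∈ Finset.univ.filter (fun v : Fin (n + 1) => v ≠ 0), (d v : ℝ) * y v
      = (dmin : ℝ) + (∑ k ∈ Finset.range (M - 1), 2 ^ k * w k)
        + ((K : ℝ) - (dmin : ℝ) - 2 ^ (M - 1) + 1) * w (M - 1)) ∧
    (dmin : ℝ) ≤
      (∑ v ∈ Finset.univ.filter (fun v : Fin (n + 1) => v ≠ 0), (d v : ℝ) * y v) ∧
    (∑ v ∈ Finset.univ.filter (fun v : Fin (n + 1) => v ≠ 0), (d v : ℝ) * y v)
      ≤ (K : ℝ) := by

  -- each square term vanishes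
  have sq0 : ∀ (s : Finset (Fin m)) (f : Fin m → ℝ), (∑ j ∈ s, (f j)^2 = 0) → ∀ j ∈ s, f j = 0 := by
    intro s f h j hj
    have := (Finset.sum_eq_zero_iff_of_nonneg (fun i _ => sq_nonneg (f i))).1 h j hj
    exact pow_eq_zero_iff (by norm_num) |>.1 this
  have h1 : ∀ j : Fin m, ∑ v : Fin (n + 1), x v j = 1 := by
    intro j
    have := sq0 Finset.univ _ h7d j (Finset.mem_univ j)
    linarith
  have h2 : ∀ v : Fin (n + 1), v ≠ 0 → y v = ∑ j : Fin m, x v j := by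
    intro v hv
    have := (Finset.sum_eq_zero_iff_of_nonneg
      (fun i _ => sq_nonneg (y i - ∑ j : Fin m, x i j))).1 h7e v (by simp [hv])
    have := pow_eq_zero_iff (two_ne_zero) |>.1 this
    linarith
  have h3 : (∑ v ∈ Finset.univ.filter (fun v : Fin (n + 1) => v ≠ 0), (d v : ℝ) * y v)
      = (dmin : ℝ) + (∑ k ∈ Finset.range (M - 1), 2 ^ k * w k)
        + ((K : ℝ) - (dmin : ℝ) - 2 ^ (M - 1) + 1) * w (M - 1) := by
    have := pow_eq_zero_iff (two_ne_zero) |>.1 h7f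
    linarith
  -- key nat inequality : 2 ^ (M - 1) ≤ K - dmin + 1
  have hM1 : 1 < K - dmin + 1 := by omega
  have hpow : 2 ^ (M - 1) < K - dmin + 1 := by
    rw [hM]
    exact Nat.pow_pred_clog_lt_self one_lt_two hM1
  have hc : (0 : ℝ) ≤ (K : ℝ) - (dmin : ℝ) - 2 ^ (M - 1) + 1 := by
    have : ((2 : ℕ) ^ (M - 1) : ℝ) ≤ ((K - dmin + 1 : ℕ) : ℝ) := by
      exact_mod_cast hpow.le
    push_cast at this
    have hKd : (dmin : ℝ) ≤ (K : ℝ) := by exact_mod_cast hdK.le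
    rw [Nat.cast_sub hdK.le] at this
    linarith
  have hwle : ∀ k, 0 ≤ w k ∧ w k ≤ 1 := by
    intro k; rcases hw k with h | h <;> simp [h]
  have hS0 : (0 : ℝ) ≤ ∑ k ∈ Finset.range (M - 1), 2 ^ k * w k :=
    Finset.sum_nonneg fun k _ => mul_nonneg (by positivity) (hwle k).1
  have hS1 : (∑ k ∈ Finset.range (M - 1), 2 ^ k * w k) ≤ 2 ^ (M - 1) - 1 := by
    have : (∑ k ∈ Finset.range (M - 1), 2 ^ k * w k) ≤ ∑ k ∈ Finset.range (M - 1), (2:ℝ) ^ k :=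
      Finset.sum_le_sum fun k _ => by
        have := (hwle k).2
        have h2k : (0:ℝ) ≤ (2:ℝ)^k := by positivity
        nlinarith
    have hg : ∑ k ∈ Finset.range (M - 1), (2:ℝ) ^ k = 2 ^ (M - 1) - 1 := by
      have := geom_sum_eq (by norm_num : (2:ℝ) ≠ 1) (M - 1)
      rw [this]; ring
    linarith
  refine ⟨h1, h2, h3, ?_, ?_⟩
  · rw [h3]
    have := mul_nonneg hc (hwle (M - 1)).1
    linarith
  · rw [h3]
    have hcw : ((K : ℝ) - (dmin : ℝ) - 2 ^ (M - 1) + 1) * w (M - 1)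
        ≤ (K : ℝ) - (dmin : ℝ) - 2 ^ (M - 1) + 1 := by
      nlinarith [(hwle (M-1)).2, (hwle (M-1)).1]
    linarith
end
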